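/- arXiv:2510.15117 — 4 statements merged into one kernel-verified Lean document; each statement's English description precedes it below -/
import Mathlib

section
/- Fix an integer k ≥ 2 and real δ > 0 with (1+1/k)δ < 1. There exists T such that for all natural numbers t ≥ r ≥ k with t ≥ T, if f_k(r) ≥ (1-δ) f_k(t), then C(t,k) - C(r,k) ≥ (t-r)(1 - (1+1/k)δ) f_k(t-1)/(k-1)!, where f_k(x) = x(x-1)···(x-k+2). -/
lemma natAux_stmt3 (m r t : ℕ) (h : r ≤ t) :
    (t - r) * r.choose m + r.choose (m+1) ≤ t.choose (m+1) := by
  induction t, h using Nat.le_induction with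
  | base => simp
  | succ t ht ih =>
    have h1 : r.choose m ≤ t.choose m := Nat.choose_le_choose m ht
    have h2 : (t+1).choose (m+1) = t.choose m + t.choose (m+1) := Nat.choose_succ_succ t m
    have h3 : t + 1 - r = (t - r) + 1 := by omega
    rw [h3, add_mul, one_mul, h2]
    omega

lemma shiftAux_stmt3 (x : ℝ) (n : ℕ) :
    (∏ i ∈ Finset.range n, (x - 1 - i)) * x = (∏ i ∈ Finset.range n, (x - i)) * (x - n) := by
  induction n with
  | zero => simp
  | succ n ih =>
    rw [Finset.prod_range_succ, Finset.prod_range_succ]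
    push_cast
    linear_combination (x - 1 - n) * ih

/-- For fixed `k ≥ 2` and `δ > 0` with `(1+1/k)δ < 1`, for all sufficiently large `t`:
if `k ≤ r ≤ t` and `f_k(r) ≥ (1-δ) f_k(t)`, then
`C(t,k) - C(r,k) ≥ (t-r)(1-(1+1/k)δ) f_k(t-1)/(k-1)!`. -/
theorem stmt_3 (k : ℕ) (hk : 2 ≤ k) (δ : ℝ) (hδ : 0 < δ) (hδ' : (1 + 1 / (k : ℝ)) * δ < 1) :
    ∃ T : ℕ, ∀ t r : ℕ, k ≤ r → r ≤ t → T ≤ t →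
      (1 - δ) * (∏ i ∈ Finset.range (k - 1), ((t : ℝ) - i)) ≤
          ∏ i ∈ Finset.range (k - 1), ((r : ℝ) - i) →
      ((t : ℝ) - r) * (1 - (1 + 1 / (k : ℝ)) * δ) *
          (∏ i ∈ Finset.range (k - 1), ((t : ℝ) - 1 - i)) / (k - 1).factorial ≤
        (t.choose k : ℝ) - (r.choose k : ℝ) := by
  obtain ⟨m, rfl⟩ : ∃ m, k = m + 1 := ⟨k - 1, by omega⟩
  have hm1 : 1 ≤ m := by omega
  refine ⟨m + 1, ?_⟩
  intro t r hkr hrt hTt hf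
  simp only [Nat.add_sub_cancel] at hf ⊢
  have htk : m + 1 ≤ t := le_trans hkr hrt
  set A := ∏ i ∈ Finset.range m, ((t : ℝ) - i) with hA
  set B := ∏ i ∈ Finset.range m, ((r : ℝ) - i) with hBdef
  set C := ∏ i ∈ Finset.range m, ((t : ℝ) - 1 - i) with hCdef
  set c : ℝ := (1 + 1 / ((m : ℝ) + 1)) * δ with hcdef
  have hcast : ((m + 1 : ℕ) : ℝ) = (m : ℝ) + 1 := by push_cast; ring
  have htR : (m : ℝ) + 1 ≤ (t : ℝ) := by exact_mod_cast htk
  have ht0 : (0 : ℝ) < t := by linarith [Nat.cast_nonneg (α := ℝ) m]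
  have hA0 : 0 ≤ A := by
    apply Finset.prod_nonneg
    intro i hi
    have : i < m := Finset.mem_range.mp hi
    have : (i : ℝ) < (m : ℝ) := by exact_mod_cast this
    linarith
  have hC0 : 0 ≤ C := by
    apply Finset.prod_nonneg
    intro i hi
    have : i < m := Finset.mem_range.mp hi
    have : (i : ℝ) < (m : ℝ) := by exact_mod_cast this
    linarith
  have hmpos : (0 : ℝ) < (m : ℝ) + 1 := by positivity
  have hc0 : 0 ≤ 1 - c := by
    rw [hcdef]
    rw [hcast] at hδ'
    linarith
  have hcδ : δ ≤ c := by
    have : 0 < 1 / ((m : ℝ) + 1) := by positivity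
    nlinarith
  -- key scalar inequality
  have hshift := shiftAux_stmt3 (t : ℝ) m
  have key : (1 - c) * C ≤ (1 - δ) * A := by
    have hscal : (1 - c) * ((t : ℝ) - m) ≤ (1 - δ) * (t : ℝ) := by
      nlinarith [mul_nonneg hc0 (Nat.cast_nonneg (α := ℝ) m),
        mul_nonneg (by linarith : (0:ℝ) ≤ c - δ) ht0.le]
    have h1 : (1 - c) * C * (t : ℝ) ≤ (1 - δ) * A * (t : ℝ) := by
      calc (1 - c) * C * (t : ℝ) = (1 - c) * (C * (t : ℝ)) := by ring
        _ = (1 - c) * (A * ((t : ℝ) - m)) := by rw [hshift]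
        _ = A * ((1 - c) * ((t : ℝ) - m)) := by ring
        _ ≤ A * ((1 - δ) * (t : ℝ)) := by
            apply mul_le_mul_of_nonneg_left hscal hA0
        _ = (1 - δ) * A * (t : ℝ) := by ring
    exact le_of_mul_le_mul_right h1 ht0
  have key2 : (1 - c) * C ≤ B := key.trans hf
  -- relate B to choose
  have hB : B = (m.factorial : ℝ) * (r.choose m : ℝ) := by
    have h1 : r.descFactorial m = ∏ i ∈ Finset.range m, (r - i) :=
      Nat.descFactorial_eq_prod_range r m
    have h2 : B = ((r.descFactorial m : ℕ) : ℝ) := by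
      rw [h1, Nat.cast_prod]
      apply Finset.prod_congr rfl
      intro i hi
      have : i ≤ r := by
        have := Finset.mem_range.mp hi; omega
      rw [Nat.cast_sub this]
    rw [h2, Nat.descFactorial_eq_factorial_mul_choose]
    push_cast
    ring
  have hnat := natAux_stmt3 m r t hrt
  have hnatR : ((t : ℝ) - r) * (r.choose m : ℝ) + (r.choose (m+1) : ℝ) ≤
      (t.choose (m+1) : ℝ) := by
    have : (((t - r) * r.choose m + r.choose (m+1) : ℕ) : ℝ) ≤ ((t.choose (m+1) : ℕ) : ℝ) := by
      exact_mod_cast hnat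
    push_cast [Nat.cast_sub hrt] at this
    linarith
  have htr0 : (0 : ℝ) ≤ (t : ℝ) - r := by
    have : (r : ℝ) ≤ (t : ℝ) := by exact_mod_cast hrt
    linarith
  have hfact : (0 : ℝ) < (m.factorial : ℝ) := by positivity
  calc ((t : ℝ) - r) * (1 - (1 + 1 / ((m + 1 : ℕ) : ℝ)) * δ) * C / (m.factorial : ℝ)
      = ((t : ℝ) - r) * ((1 - c) * C) / (m.factorial : ℝ) := by rw [hcast]; ring
    _ ≤ ((t : ℝ) - r) * B / (m.factorial : ℝ) := by
        gcongr
    _ = ((t : ℝ) - r) * (r.choose m : ℝ) := by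
        rw [hB]; field_simp
    _ ≤ (t.choose (m+1) : ℝ) - (r.choose (m+1) : ℝ) := by linarith
end

section
/- Let h(x) = x(x-1)···(x-k+1) be the falling factorial of length k, for integer k ≥ 1. Then for every real t ≥ k-1, the derivative satisfies h'(t) ≥ k · f_k(t-1), where f_k(x) = x(x-1)···(x-k+2). -/
/-! By the product rule, `h'(t) = ∑ⱼ ∏_{i ≠ j} (t - i)`, a sum of `k` terms. For `t ≥ k - 1` the
factors `t - i` are nonnegative and decreasing in `i`, so each term, which omits one factor of
`t (t-1) ⋯ (t-k+1)`, dominates the product `(t-1) ⋯ (t-k+1) = f_k(t-1)` that omits the largest one. -/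

open Finset

theorem hasDerivAt_prod_sub {𝕜 ι : Type*} [NontriviallyNormedField 𝕜] [DecidableEq ι]
    (s : Finset ι) (a : ι → 𝕜) (x : 𝕜) :
    HasDerivAt (fun y => ∏ i ∈ s, (y - a i)) (∑ j ∈ s, ∏ i ∈ s.erase j, (x - a i)) x := by
  simpa using HasDerivAt.fun_finsetProd (u := s) (f' := fun _ => (1 : 𝕜))
    fun i _ => (hasDerivAt_id x).sub_const (a i)

theorem prod_range_succ_le_prod_range_erase {R : Type*} [CommSemiring R] [PartialOrder R]
    [IsOrderedRing R] {g : ℕ → R} {m : ℕ} (hg_nonneg : ∀ i < m, 0 ≤ g (i + 1))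
    (hg_anti : ∀ i < m, g (i + 1) ≤ g i) {j : ℕ} (hj : j ≤ m) :
    ∏ i ∈ range m, g (i + 1) ≤ ∏ i ∈ (range (m + 1)).erase j, g i := by
  induction m with
  | zero => simp [Nat.le_zero.1 hj]
  | succ m ih =>
    by_cases hjm : j = m + 1
    · subst hjm
      rw [range_add_one (n := m + 1), erase_insert notMem_range_self]
      exact prod_le_prod (fun i hi => hg_nonneg i (mem_range.1 hi))
        fun i hi => hg_anti i (mem_range.1 hi)
    · rw [range_add_one (n := m + 1), erase_insert_of_ne (Ne.symm hjm),
        prod_insert (fun h => by simpa using (mem_of_mem_erase h)), prod_range_succ, mul_comm]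
      exact mul_le_mul_of_nonneg_left
        (ih (fun i hi => hg_nonneg i (by omega)) (fun i hi => hg_anti i (by omega)) (by omega))
        (hg_nonneg m (by omega))

/-- For `h(x) = x(x-1)⋯(x-k+1)` and `t ≥ k-1`, the derivative satisfies
`h'(t) ≥ k · f_k(t-1)` where `f_k(x) = x(x-1)⋯(x-k+2)`. -/
theorem stmt_4 (k : ℕ) (hk : 1 ≤ k) (t : ℝ) (ht : (k : ℝ) - 1 ≤ t) :
    (k : ℝ) * ∏ i ∈ Finset.range (k - 1), (t - 1 - i) ≤
      deriv (fun x : ℝ => ∏ i ∈ Finset.range k, (x - i)) t := by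
  obtain ⟨m, rfl⟩ : ∃ m, k = m + 1 := ⟨k - 1, by omega⟩
  have hm : (m : ℝ) ≤ t := by push_cast at ht; linarith
  rw [(hasDerivAt_prod_sub (range (m + 1)) (fun i : ℕ => (i : ℝ)) t).deriv]
  have h_term (j : ℕ) (hj : j ≤ m) :
      ∏ i ∈ range m, (t - 1 - i) ≤ ∏ i ∈ (range (m + 1)).erase j, (t - i) := by
    have h_nonneg (i : ℕ) (hi : i < m) : 0 ≤ t - ((i + 1 : ℕ) : ℝ) := by
      have : ((i + 1 : ℕ) : ℝ) ≤ m := by exact_mod_cast hi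
      linarith
    have h := prod_range_succ_le_prod_range_erase (g := fun i : ℕ => t - i) h_nonneg
      (fun i _ => by push_cast; linarith) hj
    simpa only [Nat.cast_add, Nat.cast_one, sub_add_eq_sub_sub, sub_right_comm] using h
  calc ((m + 1 : ℕ) : ℝ) * ∏ i ∈ range (m + 1 - 1), (t - 1 - i)
      = ∑ _j ∈ range (m + 1), ∏ i ∈ range m, (t - 1 - i) := by simp
    _ ≤ ∑ j ∈ range (m + 1), ∏ i ∈ (range (m + 1)).erase j, (t - i) :=
      sum_le_sum fun j hj => h_term j (Nat.lt_succ_iff.1 (mem_range.1 hj))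
end

section
/- Let H be a k-uniform hypergraph on a finite vertex set. Then the weak independence number α(H) equals s if and only if H contains an augmented independent set of order s but contains no augmented independent set of any order greater than s. -/
/-!
Deleting one vertex from each edge inside a set `S` leaves a weakly independent set, so
`#S ≤ α + #(edges inside S)` with `α = weakIndepNum E`; hence no augmented independent set has
order above `α`.
Conversely, take `S` of maximum size among the sets whose inside edges are pairwise disjoint and
which satisfy `α + #(edges inside S) ≤ #S` (a maximum weakly independent set is one); equality
holds by the first inequality. If some `v ∉ S` lay in at most one edge inside `insert v S`, then
`insert v S` would satisfy the inequality too, so by maximality two of its inside edges share a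
vertex `x`; deleting `x` loses one vertex but two edges, contradicting the first inequality.
-/

/-- A set `W` is weakly independent if no edge is fully contained in `W`. -/
def WeakIndep {V : Type*} (E : Finset (Finset V)) (W : Finset V) : Prop :=
  ∀ e ∈ E, ¬ e ⊆ W

/-- The weak independence number: the largest size of a weakly independent set. -/
noncomputable def weakIndepNum {V : Type*} (E : Finset (Finset V)) : ℕ :=
  sSup {m | ∃ W : Finset V, WeakIndep E W ∧ W.card = m}

/-- `S` is an augmented independent set of order `s`. -/
def AugIndep {V : Type*} [DecidableEq V] (E : Finset (Finset V)) (s : ℕ) (S : Finset V) : Prop :=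
  ∃ r : ℕ, S.card = s + r ∧
    (E.filter (fun e => e ⊆ S)).card = r ∧
    (∀ e ∈ E, ∀ f ∈ E, e ⊆ S → f ⊆ S → e ≠ f → Disjoint e f) ∧
    ∀ v ∉ S, 2 ≤ (E.filter (fun e => v ∈ e ∧ e ⊆ insert v S)).card

open Finset

section Hypergraph

variable {V : Type*}

lemma Finset.exists_card_le_forall_exists_mem [DecidableEq V] {F : Finset (Finset V)}
    (hF : ∀ e ∈ F, e.Nonempty) : ∃ X : Finset V, #X ≤ #F ∧ ∀ e ∈ F, ∃ x ∈ e, x ∈ X := by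
  choose pick hpick using hF
  exact ⟨F.attach.image fun e => pick e.1 e.2, card_image_le.trans card_attach.le,
    fun e he => ⟨pick e he, hpick e he, mem_image_of_mem _ (mem_attach _ ⟨e, he⟩)⟩⟩

def InducesMatching (E : Finset (Finset V)) (S : Finset V) : Prop :=
  ∀ e ∈ E, ∀ f ∈ E, e ⊆ S → f ⊆ S → e ≠ f → Disjoint e f

lemma card_filter_subset_insert [DecidableEq V] {E : Finset (Finset V)} {v : V} {S : Finset V}
    (hv : v ∉ S) :
    #(E.filter (· ⊆ insert v S)) =
      #(E.filter (· ⊆ S)) + #(E.filter fun e => v ∈ e ∧ e ⊆ insert v S) := by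
  rw [← card_filter_add_card_filter_not (s := E.filter (· ⊆ insert v S)) (v ∈ ·), add_comm,
    filter_filter, filter_filter]
  congr 2 <;> ext e <;> simp only [mem_filter, and_congr_right_iff] <;> intro _
  · exact ⟨fun ⟨hsub, hve⟩ => (subset_insert_iff_of_notMem hve).1 hsub,
      fun hsub => ⟨hsub.trans (subset_insert v S), fun hve => hv (hsub hve)⟩⟩
  · exact and_comm

section WeakIndepNum

variable [Fintype V] {E : Finset (Finset V)}

lemma bddAbove_weakIndep_card (E : Finset (Finset V)) :
    BddAbove {m | ∃ W : Finset V, WeakIndep E W ∧ #W = m} :=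
  ⟨Fintype.card V, by rintro m ⟨W, -, rfl⟩; exact card_le_univ W⟩

lemma WeakIndep.card_le_weakIndepNum {W : Finset V} (hW : WeakIndep E W) :
    #W ≤ weakIndepNum E :=
  le_csSup (bddAbove_weakIndep_card E) ⟨W, hW, rfl⟩

lemma exists_weakIndep_card_eq_weakIndepNum (hE : ∀ e ∈ E, e.Nonempty) :
    ∃ W : Finset V, WeakIndep E W ∧ #W = weakIndepNum E := by
  have hempty : WeakIndep E ∅ := fun e he hsub => (hE e he).ne_empty (subset_empty.1 hsub)
  exact Nat.sSup_mem (s := {m | ∃ W : Finset V, WeakIndep E W ∧ #W = m})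
    ⟨0, ∅, hempty, card_empty⟩ (bddAbove_weakIndep_card E)

variable [DecidableEq V]

lemma card_le_weakIndepNum_add_card_filter_subset (hE : ∀ e ∈ E, e.Nonempty) (S : Finset V) :
    #S ≤ weakIndepNum E + #(E.filter (· ⊆ S)) := by
  obtain ⟨X, hXcard, hX⟩ := exists_card_le_forall_exists_mem (F := E.filter (· ⊆ S))
    fun e he => hE e (mem_filter.1 he).1
  have hW : WeakIndep E (S \ X) := fun e he hsub => by
    obtain ⟨x, hxe, hxX⟩ := hX e (mem_filter.2 ⟨he, hsub.trans sdiff_subset⟩)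
    exact (mem_sdiff.1 (hsub hxe)).2 hxX
  have := hW.card_le_weakIndepNum
  have := card_le_card_sdiff_add_card (s := S) (t := X)
  omega

lemma card_add_one_le_of_not_disjoint (hE : ∀ e ∈ E, e.Nonempty) {U : Finset V}
    {e f : Finset V} (he : e ∈ E) (hf : f ∈ E) (heU : e ⊆ U) (hfU : f ⊆ U) (hef : e ≠ f)
    {x : V} (hxe : x ∈ e) (hxf : x ∈ f) :
    #U + 1 ≤ weakIndepNum E + #(E.filter (· ⊆ U)) := by
  have hlost : insert e (insert f (E.filter (· ⊆ U.erase x))) ⊆ E.filter (· ⊆ U) := by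
    refine insert_subset (mem_filter.2 ⟨he, heU⟩) (insert_subset (mem_filter.2 ⟨hf, hfU⟩) ?_)
    intro g hg
    obtain ⟨hgE, hgU⟩ := mem_filter.1 hg
    exact mem_filter.2 ⟨hgE, hgU.trans (erase_subset x U)⟩
  have hfx : f ∉ E.filter (· ⊆ U.erase x) := fun h => notMem_erase x U ((mem_filter.1 h).2 hxf)
  have hex : e ∉ insert f (E.filter (· ⊆ U.erase x)) := by
    rintro h
    rcases mem_insert.1 h with rfl | h
    · exact hef rfl
    · exact notMem_erase x U ((mem_filter.1 h).2 hxe)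
  have := card_le_card hlost
  rw [card_insert_of_notMem hex, card_insert_of_notMem hfx] at this
  have := card_le_weakIndepNum_add_card_filter_subset hE (U.erase x)
  have := card_erase_add_one (heU hxe)
  omega

lemma AugIndep.le_weakIndepNum (hE : ∀ e ∈ E, e.Nonempty) {s : ℕ} {S : Finset V}
    (h : AugIndep E s S) : s ≤ weakIndepNum E := by
  obtain ⟨r, hcard, rfl, -, -⟩ := h
  have := card_le_weakIndepNum_add_card_filter_subset hE S
  omega

lemma two_le_card_filter_mem_subset_insert (hE : ∀ e ∈ E, e.Nonempty) {S : Finset V}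
    (hcard : weakIndepNum E + #(E.filter (· ⊆ S)) ≤ #S)
    (hmax : ∀ U, InducesMatching E U → weakIndepNum E + #(E.filter (· ⊆ U)) ≤ #U → #U ≤ #S)
    {v : V} (hv : v ∉ S) : 2 ≤ #(E.filter fun e => v ∈ e ∧ e ⊆ insert v S) := by
  by_contra! hlt
  have hsplit := card_filter_subset_insert (E := E) hv
  have hvS := card_insert_of_notMem hv
  have hU : weakIndepNum E + #(E.filter (· ⊆ insert v S)) ≤ #(insert v S) := by omega
  by_cases hUm : InducesMatching E (insert v S)
  · have := hmax _ hUm hU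
    omega
  · simp only [InducesMatching, not_forall, exists_prop] at hUm
    obtain ⟨e, he, f, hf, heU, hfU, hef, hnd⟩ := hUm
    obtain ⟨x, hxe, hxf⟩ := not_disjoint_iff.1 hnd
    have := card_add_one_le_of_not_disjoint hE he hf heU hfU hef hxe hxf
    omega

lemma exists_augIndep_weakIndepNum (hE : ∀ e ∈ E, e.Nonempty) :
    ∃ S : Finset V, AugIndep E (weakIndepNum E) S := by
  classical
  obtain ⟨W, hW, hWcard⟩ := exists_weakIndep_card_eq_weakIndepNum hE
  have hWnone : E.filter (· ⊆ W) = ∅ := filter_eq_empty_iff.2 hW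
  obtain ⟨S, hSG, hmax⟩ := exists_max_image
    (univ.filter fun U => InducesMatching E U ∧ weakIndepNum E + #(E.filter (· ⊆ U)) ≤ #U) card
    ⟨W, mem_filter.2 ⟨mem_univ W, fun e he _ _ heW => absurd heW (hW e he),
      by rw [hWnone, card_empty, add_zero, hWcard]⟩⟩
  obtain ⟨-, hS, hcard⟩ := mem_filter.1 hSG
  refine ⟨S, #(E.filter (· ⊆ S)),
    le_antisymm (card_le_weakIndepNum_add_card_filter_subset hE S) hcard, rfl, hS, fun v hv => ?_⟩
  exact two_le_card_filter_mem_subset_insert hE hcard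
    (fun U hU hUcard => hmax U (mem_filter.2 ⟨mem_univ U, hU, hUcard⟩)) hv

end WeakIndepNum

end Hypergraph

/-- For a `k`-uniform hypergraph `H` on a finite vertex set, `α(H) = s` iff `H` contains an
augmented independent set of order `s` but none of any larger order. -/
theorem stmt_6 {V : Type*} [Fintype V] [DecidableEq V] (k : ℕ) (hk : 2 ≤ k)
    (E : Finset (Finset V)) (hunif : ∀ e ∈ E, e.card = k) (s : ℕ) :
    weakIndepNum E = s ↔
      ((∃ S : Finset V, AugIndep E s S) ∧
        ∀ s' : ℕ, s < s' → ¬ ∃ S : Finset V, AugIndep E s' S) := by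
  have hE : ∀ e ∈ E, e.Nonempty := fun e he => card_pos.1 (by rw [hunif e he]; omega)
  constructor
  · rintro rfl
    exact ⟨exists_augIndep_weakIndepNum hE,
      fun s' hs' ⟨S, hS⟩ => hs'.not_ge (hS.le_weakIndepNum hE)⟩
  · rintro ⟨⟨S, hS⟩, hlarger⟩
    refine le_antisymm ?_ (hS.le_weakIndepNum hE)
    by_contra! hlt
    exact hlarger _ hlt (exists_augIndep_weakIndepNum hE)
end

section
/- Let n, s̃, r, k, ℓ be natural numbers with k ≥ 2, kℓ ≤ kr ≤ s̃ ≤ n and ℓ ≥ 1. Let 𝕋 be the set of pairs (T, m_T) where T is an s̃-element subset of an n-element vertex set and m_T is a set of r pairwise disjoint k-element subsets of T; so |𝕋| = C(n, s̃) · s̃! / ((s̃ - kr)! (k!)^r r!). Fix one pair (T, m_T) ∈ 𝕋 and let 𝕋_ℓ be the set of pairs (U, m_U) ∈ 𝕋 such that m_U shares exactly ℓ edges with m_T. Then |𝕋_ℓ| ≤ C(r, ℓ) · C(n - kℓ, s̃ - kℓ) · (s̃ - kℓ)! / ((s̃ - kr)! (k!)^{r-ℓ} (r - ℓ)!). -/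
/-!
Sort the pairs `(U, m_U)` by the set `S = m_U ∩ m_T` of shared edges, one of the `C(r, ℓ)`
`ℓ`-subsets of `m_T`. For fixed `S`, deleting `S` and the `kℓ` vertices it covers leaves an
`(s̃ - kℓ)`-subset of the other `n - kℓ` vertices together with a matching of `r - ℓ` edges in it,
and `(U, m_U)` can be recovered from that pair. A `w`-set carries at most
`w! / ((w - kr)! (k!)^r r!)` matchings of `r` edges: picking an edge and then a matching of the
remaining vertices counts every matching `r` times.
-/

open Finset

/-- The family `𝕋` of pairs `(T, m_T)` with `T` an `s̃`-subset of `[n]` and `m_T` a matching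
of `r` pairwise disjoint `k`-subsets of `T`. -/
def TT (n s r k : ℕ) : Finset (Finset (Fin n) × Finset (Finset (Fin n))) :=
  Finset.univ.filter (fun p =>
    p.1.card = s ∧ p.2.card = r ∧ (∀ e ∈ p.2, e.card = k ∧ e ⊆ p.1) ∧
    (∀ e ∈ p.2, ∀ f ∈ p.2, e ≠ f → Disjoint e f))

open scoped Nat

section Matchings

variable {α : Type*} [DecidableEq α]

def matchings (W : Finset α) (r k : ℕ) : Finset (Finset (Finset α)) :=
  ((W.powersetCard k).powersetCard r).filter fun m => ∀ e ∈ m, ∀ f ∈ m, e ≠ f → Disjoint e f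

variable {W : Finset α} {r k : ℕ} {m S : Finset (Finset α)}

theorem mem_matchings :
    m ∈ matchings W r k ↔
      m ⊆ W.powersetCard k ∧ #m = r ∧ (m : Set (Finset α)).PairwiseDisjoint id := by
  rw [matchings, mem_filter, mem_powersetCard, and_assoc]
  rfl

theorem card_matchings_zero_le : #(matchings W 0 k) ≤ 1 :=
  (card_filter_le _ _).trans (by rw [card_powersetCard, Nat.choose_zero_right])

theorem mem_matchings_of_subset (hm : m ∈ matchings W r k) (hS : S ⊆ m) :
    S ∈ matchings W #S k := by
  rw [mem_matchings] at hm ⊢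
  exact ⟨hS.trans hm.1, rfl, hm.2.2.subset hS⟩

theorem biUnion_subset_of_mem_matchings (hm : m ∈ matchings W r k) : m.biUnion id ⊆ W :=
  biUnion_subset.mpr fun _ he => (mem_powersetCard.mp ((mem_matchings.mp hm).1 he)).1

theorem card_biUnion_of_mem_matchings (hm : m ∈ matchings W r k) : #(m.biUnion id) = k * r := by
  obtain ⟨hsub, rfl, hdisj⟩ := mem_matchings.mp hm
  rw [card_biUnion hdisj, mul_comm,
    sum_const_nat (f := fun e => #(id e)) fun e he => (mem_powersetCard.mp (hsub he)).2]

theorem sdiff_mem_matchings (hm : m ∈ matchings W r k) (hS : S ⊆ m) :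
    m \ S ∈ matchings (W \ S.biUnion id) (r - #S) k := by
  obtain ⟨hsub, rfl, hdisj⟩ := mem_matchings.mp hm
  refine mem_matchings.mpr ⟨fun e he => ?_, card_sdiff_of_subset hS, hdisj.subset sdiff_subset⟩
  obtain ⟨hem, heS⟩ := mem_sdiff.mp he
  obtain ⟨heW, hek⟩ := mem_powersetCard.mp (hsub hem)
  refine mem_powersetCard.mpr ⟨subset_sdiff.mpr ⟨heW, ?_⟩, hek⟩
  exact (disjoint_biUnion_right _ _ _).mpr fun f hf =>
    hdisj hem (hS hf) (ne_of_mem_of_not_mem hf heS).symm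

theorem card_matchings_succ_mul_le :
    #(matchings W (r + 1) k) * (r + 1) ≤ ∑ e ∈ W.powersetCard k, #(matchings (W \ e) r k) := by
  have hsum : #(matchings W (r + 1) k) * (r + 1) = #((matchings W (r + 1) k).sigma id) := by
    rw [card_sigma, sum_const_nat (f := fun m => #(id m)) fun m hm => (mem_matchings.mp hm).2.1]
  rw [hsum, ← card_sigma]
  refine card_le_card_of_injOn (fun x => ⟨x.2, x.1 \ {x.2}⟩) (fun ⟨m, e⟩ h => ?_) ?_
  · obtain ⟨hm, he⟩ := mem_sigma.mp h
    have := sdiff_mem_matchings hm (singleton_subset_iff.mpr he)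
    rw [singleton_biUnion, card_singleton, Nat.add_sub_cancel] at this
    exact mem_sigma.mpr ⟨(mem_matchings.mp hm).1 he, this⟩
  · rintro ⟨m₁, e⟩ h₁ ⟨m₂, e'⟩ h₂ heq
    obtain ⟨rfl, hm⟩ := Sigma.mk.inj_iff.mp heq
    have h₁ : {e} ⊆ m₁ := singleton_subset_iff.mpr (mem_sigma.mp h₁).2
    have h₂ : {e} ⊆ m₂ := singleton_subset_iff.mpr (mem_sigma.mp h₂).2
    congr
    rw [← sdiff_union_of_subset h₁, ← sdiff_union_of_subset h₂, eq_of_heq hm]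

theorem card_matchings_mul_le (W : Finset α) (r k : ℕ) :
    #(matchings W r k) * ((#W - k * r)! * k ! ^ r * r !) ≤ (#W)! := by
  induction r generalizing W with
  | zero => simpa using Nat.mul_le_mul_right (#W)! card_matchings_zero_le
  | succ r ih =>
    have hfactor : ∀ e ∈ W.powersetCard k,
        #(matchings (W \ e) r k) * ((#W - k - k * r)! * k ! ^ r * r !) ≤ (#W - k)! := by
      intro e he
      obtain ⟨heW, hek⟩ := mem_powersetCard.mp he
      simpa only [card_sdiff_of_subset heW, hek] using ih (W \ e)
    calc #(matchings W (r + 1) k) * ((#W - k * (r + 1))! * k ! ^ (r + 1) * (r + 1)!)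
        = #(matchings W (r + 1) k) * (r + 1) * ((#W - k - k * r)! * k ! ^ r * r !) * k ! := by
          rw [Nat.factorial_succ, pow_succ, mul_add_one, add_comm (k * r), ← Nat.sub_sub]
          ring
      _ ≤ (∑ e ∈ W.powersetCard k, #(matchings (W \ e) r k)) *
            ((#W - k - k * r)! * k ! ^ r * r !) * k ! := by
          gcongr
          exact card_matchings_succ_mul_le
      _ ≤ (∑ e ∈ W.powersetCard k, (#W - k)!) * k ! := by
          rw [sum_mul]
          gcongr with e he
          exact hfactor e he
      _ ≤ (#W)! := by
          rw [sum_const, card_powersetCard, smul_eq_mul]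
          rcases le_or_gt k #W with hkW | hkW
          · rw [mul_right_comm, Nat.choose_mul_factorial_mul_factorial hkW]
          · simp [Nat.choose_eq_zero_of_lt hkW]

end Matchings

section Configurations

variable {n s r k ℓ : ℕ}

theorem mem_TT_iff {T : Finset (Fin n)} {m : Finset (Finset (Fin n))} :
    (T, m) ∈ TT n s r k ↔ #T = s ∧ m ∈ matchings T r k := by
  simp only [TT, mem_filter, mem_univ, true_and, mem_matchings, subset_iff, mem_powersetCard]
  refine and_congr_right fun _ => ?_
  rw [and_left_comm]
  exact and_congr (forall₂_congr fun _ _ => and_comm) Iff.rfl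

theorem card_filter_superset_TT_mul_le {W : Finset (Fin n)} {S : Finset (Finset (Fin n))}
    (hℓr : ℓ ≤ r) (hS : S ∈ matchings W ℓ k) :
    #((TT n s r k).filter fun p => S ⊆ p.2) * ((s - k * r)! * k ! ^ (r - ℓ) * (r - ℓ)!) ≤
      (n - k * ℓ).choose (s - k * ℓ) * (s - k * ℓ)! := by
  set A := S.biUnion id
  have hSℓ : #S = ℓ := (mem_matchings.mp hS).2.1
  have hAc : #Aᶜ = n - k * ℓ := by
    rw [card_compl, Fintype.card_fin, card_biUnion_of_mem_matchings hS]
  have hAT : ∀ p ∈ (TT n s r k).filter (fun p => S ⊆ p.2), A ⊆ p.1 := fun _ h =>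
    biUnion_subset_of_mem_matchings
      (mem_matchings_of_subset (mem_TT_iff.mp (mem_filter.mp h).1).2 (mem_filter.mp h).2)
  have hinj : #((TT n s r k).filter fun p => S ⊆ p.2) ≤
      #((Aᶜ.powersetCard (s - k * ℓ)).sigma fun U => matchings U (r - ℓ) k) := by
    refine card_le_card_of_injOn (fun p => ⟨p.1 \ A, p.2 \ S⟩) (fun ⟨T, m⟩ h => ?_) ?_
    · obtain ⟨hT, hSm⟩ := mem_filter.mp h
      obtain ⟨hTs, hm⟩ := mem_TT_iff.mp hT
      refine mem_sigma.mpr ⟨mem_powersetCard.mpr ⟨?_, ?_⟩, ?_⟩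
      · exact fun x hx => mem_compl.mpr (mem_sdiff.mp hx).2
      · rw [card_sdiff_of_subset (hAT _ h), hTs, card_biUnion_of_mem_matchings hS]
      · simpa only [hSℓ] using sdiff_mem_matchings hm hSm
    · rintro ⟨T₁, m₁⟩ h₁ ⟨T₂, m₂⟩ h₂ heq
      obtain ⟨hT, hm⟩ := Sigma.mk.inj_iff.mp heq
      refine Prod.ext ?_ ?_
      · rw [← sdiff_union_of_subset (hAT _ h₁), ← sdiff_union_of_subset (hAT _ h₂)]
        exact congrArg (· ∪ A) hT
      · rw [← sdiff_union_of_subset (mem_filter.mp h₁).2,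
          ← sdiff_union_of_subset (mem_filter.mp h₂).2]
        exact congrArg (· ∪ S) (eq_of_heq hm)
  have hfactor : ∀ U ∈ Aᶜ.powersetCard (s - k * ℓ),
      #(matchings U (r - ℓ) k) * ((s - k * r)! * k ! ^ (r - ℓ) * (r - ℓ)!) ≤ (s - k * ℓ)! := by
    intro U hU
    have hrest : s - k * ℓ - k * (r - ℓ) = s - k * r := by
      rw [Nat.sub_sub, ← mul_add, Nat.add_sub_cancel' hℓr]
    have := card_matchings_mul_le U (r - ℓ) k
    rwa [(mem_powersetCard.mp hU).2, hrest] at this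
  calc #((TT n s r k).filter fun p => S ⊆ p.2) * ((s - k * r)! * k ! ^ (r - ℓ) * (r - ℓ)!)
      ≤ ∑ U ∈ Aᶜ.powersetCard (s - k * ℓ),
          #(matchings U (r - ℓ) k) * ((s - k * r)! * k ! ^ (r - ℓ) * (r - ℓ)!) := by
        rw [← sum_mul, ← card_sigma]
        gcongr
    _ ≤ ∑ U ∈ Aᶜ.powersetCard (s - k * ℓ), (s - k * ℓ)! := sum_le_sum hfactor
    _ = (n - k * ℓ).choose (s - k * ℓ) * (s - k * ℓ)! := by
        rw [sum_const, card_powersetCard, hAc, smul_eq_mul]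

end Configurations

theorem stmt_10_general (n s r k ℓ : ℕ) (hℓr : ℓ ≤ r)
    (T : Finset (Fin n)) (mT : Finset (Finset (Fin n))) (hT : (T, mT) ∈ TT n s r k) :
    ((TT n s r k).filter (fun p => (p.2 ∩ mT).card = ℓ)).card *
        ((s - k * r).factorial * (k.factorial) ^ (r - ℓ) * (r - ℓ).factorial) ≤
      r.choose ℓ * (n - k * ℓ).choose (s - k * ℓ) * (s - k * ℓ).factorial := by
  have hmT := (mem_TT_iff.mp hT).2
  set F := (TT n s r k).filter fun p => #(p.2 ∩ mT) = ℓ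
  have hfibers : #F = ∑ S ∈ mT.powersetCard ℓ, #(F.filter fun p => p.2 ∩ mT = S) :=
    card_eq_sum_card_fiberwise fun p hp =>
      mem_powersetCard.mpr ⟨inter_subset_right, (mem_filter.mp hp).2⟩
  have hfiber : ∀ S ∈ mT.powersetCard ℓ,
      #(F.filter fun p => p.2 ∩ mT = S) * ((s - k * r)! * k ! ^ (r - ℓ) * (r - ℓ)!) ≤
        (n - k * ℓ).choose (s - k * ℓ) * (s - k * ℓ)! := by
    intro S hS
    obtain ⟨hSmT, hSℓ⟩ := mem_powersetCard.mp hS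
    have hsub : F.filter (fun p => p.2 ∩ mT = S) ⊆ (TT n s r k).filter fun p => S ⊆ p.2 :=
      fun p hp => mem_filter.mpr
        ⟨(mem_filter.mp (mem_filter.mp hp).1).1, (mem_filter.mp hp).2 ▸ inter_subset_left⟩
    refine le_trans (Nat.mul_le_mul_right _ (card_le_card hsub)) ?_
    exact card_filter_superset_TT_mul_le hℓr (hSℓ ▸ mem_matchings_of_subset hmT hSmT)
  calc #F * ((s - k * r)! * k ! ^ (r - ℓ) * (r - ℓ)!)
      = ∑ S ∈ mT.powersetCard ℓ,
          #(F.filter fun p => p.2 ∩ mT = S) * ((s - k * r)! * k ! ^ (r - ℓ) * (r - ℓ)!) := by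
        rw [hfibers, sum_mul]
    _ ≤ ∑ S ∈ mT.powersetCard ℓ, (n - k * ℓ).choose (s - k * ℓ) * (s - k * ℓ)! :=
        sum_le_sum hfiber
    _ = r.choose ℓ * (n - k * ℓ).choose (s - k * ℓ) * (s - k * ℓ)! := by
        rw [sum_const, card_powersetCard, (mem_matchings.mp hmT).2.1, smul_eq_mul, mul_assoc]

/-- For a fixed `(T, m_T) ∈ 𝕋`, the number of pairs `(U, m_U) ∈ 𝕋` with `m_U` sharing exactly
`ℓ` edges with `m_T` is at most `C(r,ℓ)·C(n-kℓ, s̃-kℓ)·(s̃-kℓ)!/((s̃-kr)!(k!)^{r-ℓ}(r-ℓ)!)`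
(stated multiplied out to avoid division). -/
theorem stmt_10 (n s r k ℓ : ℕ) (hk : 2 ≤ k) (hℓ : 1 ≤ ℓ) (hℓr : ℓ ≤ r)
    (hrs : k * r ≤ s) (hsn : s ≤ n)
    (T : Finset (Fin n)) (mT : Finset (Finset (Fin n))) (hT : (T, mT) ∈ TT n s r k) :
    ((TT n s r k).filter (fun p => (p.2 ∩ mT).card = ℓ)).card *
        ((s - k * r).factorial * (k.factorial) ^ (r - ℓ) * (r - ℓ).factorial) ≤
      r.choose ℓ * (n - k * ℓ).choose (s - k * ℓ) * (s - k * ℓ).factorial :=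
  stmt_10_general n s r k ℓ hℓr T mT hT
end
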